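/- Let h ≥ 2 and write d_h(j) for the graph distance in MC(3^h) from the vertex 0 to the vertex j mod 3^h, and d_{h−1}(j) for the corresponding distance in MC(3^{h−1}). Then: (i) d_h(j) = d_{h−1}(j) for all 0 ≤ j ≤ (3^{h−1} − 1)/2; (ii) d_h(j) = d_{h−1}(j) + 1 for all (3^{h−1} − 1)/2 < j ≤ 3^{h−1} − 1; and (iii) for every 0 ≤ j ≤ (3^{h−1} − 1)/2, d_h(3^{h−1} + j) = d_{h−1}(j) + 1. (Here j is a natural number, interpreted as an element of ℤ/3^hℤ, respectively ℤ/3^{h−1}ℤ.) -/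

import Mathlib

/-- The circulant graph `Cay(Z_n, S)`: vertices are `ZMod n`, and distinct
vertices `x, y` are adjacent iff `x - y ≡ s` or `y - x ≡ s (mod n)` for some `s ∈ S`. -/
def circulantGraph (n : ℕ) (S : Set ℕ) : SimpleGraph (ZMod n) where
  Adj x y := x ≠ y ∧ ∃ s ∈ S, (x - y = (s : ZMod n) ∨ y - x = (s : ZMod n))
  symm := by
    constructor
    rintro x y ⟨hne, s, hs, h⟩
    exact ⟨hne.symm, s, hs, h.symm⟩
  loopless := by
    constructor
    rintro x ⟨hne, -⟩
    exact hne rfl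

/-- The multiplicative circulant graph `MC(m^h) = Cay(Z_{m^h}, {m^0, m^1, …, m^{h-1}})`. -/
def MCGraph (m h : ℕ) : SimpleGraph (ZMod (m ^ h)) :=
  circulantGraph (m ^ h) {s | ∃ i < h, s = m ^ i}

namespace MCAux

/-! ### Balanced ternary digit sum -/

def bq (r : ℤ) : ℤ := (r + 1) / 3
def bd (r : ℤ) : ℤ := r - 3 * bq r
lemma bd_mem (r : ℤ) : bd r = -1 ∨ bd r = 0 ∨ bd r = 1 := by unfold bd bq; omega
lemma bq_bd (r : ℤ) : r = 3 * bq r + bd r := by unfold bd; ring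
lemma bq_natAbs_lt {r : ℤ} (h : r ≠ 0) : (bq r).natAbs < r.natAbs := by unfold bq; omega

def B (r : ℤ) : ℕ :=
  if _ : r = 0 then 0 else B (bq r) + (bd r).natAbs
  termination_by r.natAbs
  decreasing_by exact bq_natAbs_lt ‹_›

lemma B_zero : B 0 = 0 := by unfold B; simp

lemma B_eq (r : ℤ) : B r = B (bq r) + (bd r).natAbs := by
  by_cases h : r = 0
  · subst h
    have h1 : bq 0 = 0 := by unfold bq; decide
    have h2 : bd 0 = 0 := by unfold bd bq; decide
    simp [h1, h2, B_zero]
  · rw [B]; simp [h]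

lemma bq_digit (q s : ℤ) (hs : s = -1 ∨ s = 0 ∨ s = 1) : bq (3 * q + s) = q := by
  unfold bq; omega
lemma bd_digit (q s : ℤ) (hs : s = -1 ∨ s = 0 ∨ s = 1) : bd (3 * q + s) = s := by
  unfold bd bq; omega
lemma B_digit (q s : ℤ) (hs : s = -1 ∨ s = 0 ∨ s = 1) :
    B (3 * q + s) = B q + s.natAbs := by
  rw [B_eq, bq_digit q s hs, bd_digit q s hs]

lemma B_neg_aux : ∀ n : ℕ, ∀ r : ℤ, r.natAbs ≤ n → B (-r) = B r := by
  intro n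
  induction n with
  | zero => intro r h; have : r = 0 := by omega
            subst this; simp
  | succ n ih =>
    intro r h
    rcases eq_or_ne r 0 with rfl | h0
    · simp
    have hs := bd_mem r
    have heq : -r = 3 * (-bq r) + (-bd r) := by have := bq_bd r; linarith
    rw [heq, B_digit _ _ (by omega)]
    conv_rhs => rw [bq_bd r, B_digit _ _ hs]
    rw [ih (bq r) (by have := bq_natAbs_lt h0; omega), Int.natAbs_neg]

lemma B_neg (r : ℤ) : B (-r) = B r := B_neg_aux r.natAbs r le_rfl

lemma B_add_one_aux : ∀ n : ℕ, ∀ r : ℤ, r.natAbs ≤ n → B (r + 1) ≤ B r + 1 := by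
  intro n
  induction n with
  | zero => intro r h
            have : r = 0 := by omega
            subst this
            have : (0:ℤ) + 1 = 3 * 0 + 1 := by ring
            rw [this, B_digit _ _ (by omega)]; simp
  | succ n ih =>
    intro r h
    have hs := bd_mem r
    have hq : (bq r).natAbs ≤ n := by
      rcases eq_or_ne r 0 with rfl | h0
      · have : bq 0 = 0 := by unfold bq; decide
        simp [this]
      · have := bq_natAbs_lt h0; omega
    rcases hs with h1 | h1 | h1
    · have heq : r + 1 = 3 * bq r + 0 := by have := bq_bd r; omega
      rw [heq, B_digit _ _ (by omega)]
      conv_rhs => rw [bq_bd r, B_digit _ _ (by omega)]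
      simp [h1]; omega
    · have heq : r + 1 = 3 * bq r + 1 := by have := bq_bd r; omega
      rw [heq, B_digit _ _ (by omega)]
      conv_rhs => rw [bq_bd r, B_digit _ _ (by omega)]
      simp [h1]
    · have heq : r + 1 = 3 * (bq r + 1) + (-1) := by have := bq_bd r; omega
      rw [heq, B_digit _ _ (by omega)]
      conv_rhs => rw [bq_bd r, B_digit _ _ (by omega)]
      have := ih (bq r) hq
      simp [h1]; omega

lemma B_add_one (r : ℤ) : B (r + 1) ≤ B r + 1 := B_add_one_aux r.natAbs r le_rfl

lemma B_sub_one (r : ℤ) : B (r - 1) ≤ B r + 1 := by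
  rw [← B_neg (r - 1), show -(r-1) = (-r) + 1 by ring]
  calc B (-r + 1) ≤ B (-r) + 1 := B_add_one _
    _ = B r + 1 := by rw [B_neg]

lemma B_add_epow : ∀ i : ℕ, ∀ r e : ℤ, (e = 1 ∨ e = -1) →
    B (r + e * 3 ^ i) ≤ B r + 1 := by
  intro i
  induction i with
  | zero =>
    intro r e he
    rcases he with rfl | rfl
    · simpa using B_add_one r
    · simpa [sub_eq_add_neg] using B_sub_one r
  | succ i ih =>
    intro r e he
    have hs := bd_mem r
    have heq : r + e * 3 ^ (i+1) = 3 * (bq r + e * 3 ^ i) + bd r := by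
      have := bq_bd r; ring_nf; nlinarith [bq_bd r]
    rw [heq, B_digit _ _ hs]
    conv_rhs => rw [bq_bd r, B_digit _ _ hs]
    have := ih (bq r) e he
    omega

lemma pow3_odd (k : ℕ) : (3:ℤ) ^ k % 2 = 1 := by
  induction k with
  | zero => decide
  | succ k ih => rw [pow_succ]; omega

lemma pow3_odd_nat (k : ℕ) : 3 ^ k % 2 = 1 := by
  induction k with
  | zero => decide
  | succ k ih => rw [pow_succ]; omega

lemma pow3_pos (k : ℕ) : (1:ℤ) ≤ 3 ^ k := one_le_pow₀ (by norm_num)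

lemma pow3_pos_nat (k : ℕ) : 1 ≤ 3 ^ k := Nat.one_le_pow _ _ (by norm_num)

lemma cast_pow3 (k : ℕ) : ((3 ^ k : ℕ) : ℤ) = (3:ℤ) ^ k := by push_cast; ring

lemma B_min : ∀ h : ℕ, ∀ r r' : ℤ, ((3:ℤ) ^ h) ∣ (r - r') →
    2 * r.natAbs ≤ 3 ^ h - 1 → B r ≤ B r' := by
  intro h
  induction h with
  | zero =>
    intro r r' _ hr
    have : r = 0 := by simp at hr; omega
    subst this; simp [B_zero]
  | succ h ih =>
    intro r r' hdvd hr
    have hp := pow3_odd h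
    have hp1 := pow3_pos h
    have hb := bd_mem r
    have hb' := bd_mem r'
    have he := bq_bd r
    have he' := bq_bd r'
    have hc : ((3 ^ h : ℕ) : ℤ) = (3:ℤ) ^ h := cast_pow3 h
    have hc1 : ((3 ^ (h+1) : ℕ) : ℤ) = 3 * (3:ℤ) ^ h := by push_cast; ring
    have h3 : (3:ℤ) ∣ (r - r') := by
      refine dvd_trans ⟨3 ^ h, by ring⟩ hdvd
    have hbd : bd r = bd r' := by omega
    have hqd : (3:ℤ) ^ h ∣ (bq r - bq r') := by
      obtain ⟨c, hcc⟩ := hdvd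
      have hcc' : r - r' = 3 * (3 ^ h * c) := by rw [hcc]; ring
      exact ⟨c, by linarith⟩
    have hq2 : 2 * (bq r).natAbs ≤ 3 ^ h - 1 := by omega
    rw [B_eq r, B_eq r', hbd]
    exact Nat.add_le_add_right (ih _ _ hqd hq2) _

lemma B_pow_add : ∀ k : ℕ, ∀ i : ℤ, 0 ≤ i → 2 * i ≤ 3 ^ k - 1 →
    B (3 ^ k + i) = B i + 1 ∧ B (3 ^ k - i) = B i + 1 := by
  intro k
  induction k with
  | zero =>
    intro i h0 h1
    have : i = 0 := by omega
    subst this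
    have hB1 : B 1 = 1 := by
      rw [show (1:ℤ) = 3 * 0 + 1 by ring, B_digit _ _ (by omega)]
      simp [B_zero]
    norm_num [hB1, B_zero]
  | succ k ih =>
    intro i h0 h1
    have hp := pow3_odd k
    have hp1 := pow3_pos k
    have hb := bd_mem i
    have he := bq_bd i
    have hpow : (3:ℤ) ^ (k+1) = 3 * 3 ^ k := by ring
    have hq0 : 0 ≤ bq i := by omega
    have hq1 : 2 * bq i ≤ 3 ^ k - 1 := by omega
    obtain ⟨ihp, ihm⟩ := ih (bq i) hq0 hq1
    have e1 : (3:ℤ) ^ (k+1) + i = 3 * (3 ^ k + bq i) + bd i := by rw [hpow]; omega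
    have e2 : (3:ℤ) ^ (k+1) - i = 3 * (3 ^ k - bq i) + (- bd i) := by rw [hpow]; omega
    constructor
    · rw [e1, B_digit _ _ hb, ihp]
      conv_rhs => rw [he, B_digit _ _ hb]
      omega
    · rw [e2, B_digit _ _ (by omega), ihm, Int.natAbs_neg]
      conv_rhs => rw [he, B_digit _ _ hb]
      omega

/-! ### Cast helpers -/

lemma neZero_pow3 (m : ℕ) : NeZero (3 ^ m) := ⟨by positivity⟩

lemma zmod_intCast_eq (n : ℕ) (a b : ℤ) :
    ((a : ZMod n) = (b : ZMod n)) ↔ (n:ℤ) ∣ (b - a) := by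
  rw [ZMod.intCast_eq_intCast_iff, Int.modEq_iff_dvd]

lemma natCast_sub_eq_iff (n a b t : ℕ) :
    ((a : ZMod n) - b = (t : ZMod n)) ↔ (n:ℤ) ∣ ((t:ℤ) - ((a:ℤ) - b)) := by
  have h1 : ((((a:ℤ) - b) : ℤ) : ZMod n) = (a : ZMod n) - b := by push_cast; ring
  rw [← h1, show ((t : ZMod n)) = (((t:ℤ)) : ZMod n) by push_cast; ring,
    zmod_intCast_eq]

lemma val_int_dvd (m : ℕ) [NeZero m] (q : ℤ) :
    (m : ℤ) ∣ (q - (((q : ZMod m)).val : ℤ)) := by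
  rw [← ZMod.intCast_zmod_eq_zero_iff_dvd]
  push_cast [ZMod.natCast_val, ZMod.cast_id]
  simp

/-! ### The graph side -/

/-- Multiplication by 3 as a graph homomorphism `MC(3^h) → MC(3^(h+1))`. -/
def stepHom (h : ℕ) : MCGraph 3 h →g MCGraph 3 (h+1) where
  toFun x := ((3 * x.val : ℕ) : ZMod (3 ^ (h+1)))
  map_rel' := by
    haveI := neZero_pow3 h
    intro a b hab
    obtain ⟨hne, s, ⟨i, hi, rfl⟩, hs⟩ := hab
    have ha : ((a.val : ℕ) : ZMod (3 ^ h)) = a := ZMod.natCast_rightInverse a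
    have hb : ((b.val : ℕ) : ZMod (3 ^ h)) = b := ZMod.natCast_rightInverse b
    rw [← ha, ← hb] at hs
    have hva := ZMod.val_lt a
    have hvb := ZMod.val_lt b
    have hc : ((3 ^ h : ℕ) : ℤ) = (3:ℤ) ^ h := cast_pow3 h
    have hc1 : ((3 ^ (h+1) : ℕ) : ℤ) = 3 * (3:ℤ) ^ h := by push_cast; ring
    constructor
    · -- injectivity on this edge
      intro hEq
      apply hne
      have hEq' : ((3 * a.val : ℕ) : ZMod (3 ^ (h+1))) = ((3 * b.val : ℕ) : ZMod (3 ^ (h+1))) := hEq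
      have hdvd : ((3 ^ (h+1) : ℕ) : ℤ) ∣ ((3 * b.val : ℕ) : ℤ) - ((3 * a.val : ℕ) : ℤ) := by
        rw [← zmod_intCast_eq]
        push_cast
        push_cast at hEq'
        exact hEq'
    -- derive a = b
      have hval : a.val = b.val := by
        have hz : ((3*b.val:ℕ):ℤ) - ((3*a.val:ℕ):ℤ) = 0 := by
          refine Int.eq_zero_of_abs_lt_dvd hdvd ?_
          rw [hc1]
          push_cast
          have h1 : ((a.val : ℕ) : ℤ) < (3:ℤ)^h := by
            rw [← hc]; exact_mod_cast hva
          have h2 : ((b.val : ℕ) : ℤ) < (3:ℤ)^h := by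
            rw [← hc]; exact_mod_cast hvb
          have h3 : (0:ℤ) ≤ ((a.val : ℕ) : ℤ) := Int.ofNat_nonneg _
          have h4 : (0:ℤ) ≤ ((b.val : ℕ) : ℤ) := Int.ofNat_nonneg _
          rw [abs_lt]
          constructor <;> linarith
        push_cast at hz
        omega
      rw [← ha, ← hb, hval]
    · -- the edge label
      refine ⟨3 ^ (i+1), ⟨i+1, by omega, rfl⟩, ?_⟩
      have hci : ((3 ^ i : ℕ) : ℤ) = (3:ℤ) ^ i := cast_pow3 i
      have hci1 : ((3 ^ (i+1) : ℕ) : ℤ) = 3 * (3:ℤ) ^ i := by push_cast; ring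
      rcases hs with hs | hs
      · left
        rw [natCast_sub_eq_iff] at hs ⊢
        obtain ⟨c, hcc⟩ := hs
        exact ⟨c, by push_cast at hcc ⊢; linear_combination 3 * hcc⟩
      · right
        rw [natCast_sub_eq_iff] at hs ⊢
        obtain ⟨c, hcc⟩ := hs
        exact ⟨c, by push_cast at hcc ⊢; linear_combination 3 * hcc⟩


lemma stepHom_zero (h : ℕ) : stepHom h 0 = 0 := by
  haveI := neZero_pow3 h
  show ((3 * (0 : ZMod (3^h)).val : ℕ) : ZMod (3 ^ (h+1))) = 0
  rw [ZMod.val_zero]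
  simp

lemma stepHom_cast (h : ℕ) (q : ℤ) :
    stepHom h ((q : ZMod (3 ^ h))) = ((3 * q : ℤ) : ZMod (3 ^ (h+1))) := by
  haveI := neZero_pow3 h
  show ((3 * ((q : ZMod (3^h))).val : ℕ) : ZMod (3 ^ (h+1))) = ((3 * q : ℤ) : ZMod (3 ^ (h+1)))
  have hd := val_int_dvd (3 ^ h) q
  obtain ⟨c, hc⟩ := hd
  rw [show ((3 * ((q : ZMod (3^h))).val : ℕ) : ZMod (3 ^ (h+1)))
      = (((3 * ((q : ZMod (3^h))).val : ℕ) : ℤ) : ZMod (3 ^ (h+1))) by push_cast; ring]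
  rw [zmod_intCast_eq]
  exact ⟨c, by push_cast at hc ⊢; linear_combination 3 * hc⟩

lemma adj_intCast (m : ℕ) (x y : ℤ) (i : ℕ) (him : i < m)
    (hdvd : ((3^m : ℕ):ℤ) ∣ (x - y - 3 ^ i) ∨ ((3^m : ℕ):ℤ) ∣ (y - x - 3 ^ i))
    (hne : ¬ ((3^m : ℕ):ℤ) ∣ (x - y)) :
    (MCGraph 3 m).Adj (x : ZMod (3 ^ m)) (y : ZMod (3 ^ m)) := by
  constructor
  · intro hEq
    exact hne (dvd_sub_comm.mp ((zmod_intCast_eq _ _ _).mp hEq))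
  · refine ⟨3 ^ i, ⟨i, him, rfl⟩, ?_⟩
    rcases hdvd with hd | hd
    · left
      rw [show (x : ZMod (3^m)) - y = ((x - y : ℤ) : ZMod (3^m)) by push_cast; ring,
        show ((3^i : ℕ) : ZMod (3^m)) = (((3:ℤ)^i : ℤ) : ZMod (3^m)) by push_cast; ring,
        zmod_intCast_eq]
      obtain ⟨c, hc⟩ := hd
      exact ⟨-c, by linarith⟩
    · right
      rw [show (y : ZMod (3^m)) - x = ((y - x : ℤ) : ZMod (3^m)) by push_cast; ring,
        show ((3^i : ℕ) : ZMod (3^m)) = (((3:ℤ)^i : ℤ) : ZMod (3^m)) by push_cast; ring,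
        zmod_intCast_eq]
      obtain ⟨c, hc⟩ := hd
      exact ⟨-c, by linarith⟩

lemma pow3_cast_big (h : ℕ) : (3:ℤ) ≤ ((3 ^ (h+1) : ℕ) : ℤ) := by
  rw [cast_pow3]
  have h1 := pow3_pos h
  have h2 : (3:ℤ)^(h+1) = 3 * 3^h := by ring
  omega

lemma exists_walk : ∀ h : ℕ, ∀ r : ℤ,
    ∃ W : (MCGraph 3 h).Walk 0 ((r : ZMod (3 ^ h))), W.length ≤ B r := by
  intro h
  induction h with
  | zero =>
    intro r
    haveI : Subsingleton (ZMod (3 ^ 0)) := by rw [pow_zero]; infer_instance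
    have hz : ((r : ZMod (3 ^ 0))) = 0 := Subsingleton.elim _ _
    exact ⟨SimpleGraph.Walk.nil.copy rfl hz.symm, by simp⟩
  | succ h ih =>
    intro r
    obtain ⟨W, hW⟩ := ih (bq r)
    let W1 : (MCGraph 3 (h+1)).Walk 0 (((3 * bq r : ℤ) : ZMod (3 ^ (h+1)))) :=
      (W.map (stepHom h)).copy (stepHom_zero h) (stepHom_cast h (bq r))
    have hlen1 : W1.length = W.length := by
      simp [W1]
    have hb := bd_mem r
    have he := bq_bd r
    have hBr : B r = B (bq r) + (bd r).natAbs := by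
      conv_lhs => rw [he]
      rw [B_digit _ _ hb]
    have hbig := pow3_cast_big h
    rcases hb with h1 | h1 | h1
    · have hadj : (MCGraph 3 (h+1)).Adj (((3 * bq r : ℤ) : ZMod (3 ^ (h+1))))
          ((r : ZMod (3 ^ (h+1)))) := by
        apply adj_intCast _ _ _ 0 (by omega)
        · left
          exact ⟨0, by push_cast; omega⟩
        · intro hd
          rw [show 3 * bq r - r = 1 by omega] at hd
          have := Int.le_of_dvd one_pos hd
          omega
      refine ⟨W1.concat hadj, ?_⟩
      rw [SimpleGraph.Walk.length_concat, hlen1]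
      omega
    · have hceq : ((r : ZMod (3 ^ (h+1)))) = (((3 * bq r : ℤ) : ZMod (3 ^ (h+1)))) := by
        conv_lhs => rw [show r = 3 * bq r by omega]
      refine ⟨W1.copy rfl hceq.symm, ?_⟩
      rw [SimpleGraph.Walk.length_copy, hlen1]
      omega
    · have hadj : (MCGraph 3 (h+1)).Adj (((3 * bq r : ℤ) : ZMod (3 ^ (h+1))))
          ((r : ZMod (3 ^ (h+1)))) := by
        apply adj_intCast _ _ _ 0 (by omega)
        · right
          exact ⟨0, by push_cast; omega⟩
        · intro hd
          rw [show 3 * bq r - r = -1 by omega] at hd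
          have hd' : ((3 ^ (h+1) : ℕ) : ℤ) ∣ 1 := by simpa using hd.neg_right
          have := Int.le_of_dvd one_pos hd'
          omega
      refine ⟨W1.concat hadj, ?_⟩
      rw [SimpleGraph.Walk.length_concat, hlen1]
      omega

lemma walk_lower (h : ℕ) : ∀ (u x : ZMod (3 ^ h)) (W : (MCGraph 3 h).Walk u x),
    ∃ r : ℤ, ((r : ZMod (3 ^ h))) = x - u ∧ B r ≤ W.length := by
  intro u x W
  induction W with
  | nil => exact ⟨0, by simp, by simp [B_zero]⟩
  | @cons u v w hadj W ih =>
    obtain ⟨r', h1, h2⟩ := ih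
    obtain ⟨hne, s, ⟨i, hi, rfl⟩, hs⟩ := hadj
    rcases hs with hs | hs
    · -- u - v = 3 ^ i, take r = r' - 3^i
      refine ⟨r' - 3 ^ i, ?_, ?_⟩
      · push_cast
        push_cast at h1 hs
        linear_combination h1 + hs
      · have hle := B_add_epow i r' (-1) (Or.inr rfl)
        rw [show r' + (-1) * 3 ^ i = r' - 3 ^ i by ring] at hle
        show B _ ≤ W.length + 1
        omega
    · -- v - u = 3 ^ i, take r = r' + 3^i
      refine ⟨r' + 3 ^ i, ?_, ?_⟩
      · push_cast
        push_cast at h1 hs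
        linear_combination h1 - hs
      · have hle := B_add_epow i r' 1 (Or.inl rfl)
        rw [show r' + 1 * 3 ^ i = r' + 3 ^ i by ring] at hle
        show B _ ≤ W.length + 1
        omega

lemma dist_eq_B (h : ℕ) (r : ℤ) (hr : 2 * r.natAbs ≤ 3 ^ h - 1) :
    (MCGraph 3 h).dist 0 ((r : ZMod (3 ^ h))) = B r := by
  obtain ⟨W, hW⟩ := exists_walk h r
  refine le_antisymm (le_trans (SimpleGraph.dist_le W) hW) ?_
  obtain ⟨W', hW'⟩ := SimpleGraph.Reachable.exists_walk_length_eq_dist ⟨W⟩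
  obtain ⟨r', h1, h2⟩ := walk_lower h 0 _ W'
  have hcong : (3:ℤ) ^ h ∣ (r - r') := by
    have hE : ((r' : ZMod (3 ^ h))) = ((r : ZMod (3 ^ h))) := by rw [h1]; simp
    have hD := (zmod_intCast_eq _ _ _).mp hE
    rw [cast_pow3] at hD
    exact hD
  exact le_trans (B_min h r r' hcong hr) (h2.trans (le_of_eq hW'))

end MCAux

open MCAux in
/-- Recursion for distances from `0` in `MC(3^h)` in terms of `MC(3^(h-1))`. -/
theorem MC_three_dist_recursion (h : ℕ) (hh : 2 ≤ h) :
    (∀ j : ℕ, j ≤ (3 ^ (h - 1) - 1) / 2 →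
        (MCGraph 3 h).dist 0 (j : ZMod (3 ^ h)) =
          (MCGraph 3 (h - 1)).dist 0 (j : ZMod (3 ^ (h - 1)))) ∧
    (∀ j : ℕ, (3 ^ (h - 1) - 1) / 2 < j → j ≤ 3 ^ (h - 1) - 1 →
        (MCGraph 3 h).dist 0 (j : ZMod (3 ^ h)) =
          (MCGraph 3 (h - 1)).dist 0 (j : ZMod (3 ^ (h - 1))) + 1) ∧
    (∀ j : ℕ, j ≤ (3 ^ (h - 1) - 1) / 2 →
        (MCGraph 3 h).dist 0 ((3 ^ (h - 1) + j : ℕ) : ZMod (3 ^ h)) =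
          (MCGraph 3 (h - 1)).dist 0 (j : ZMod (3 ^ (h - 1))) + 1) := by
  obtain ⟨k, rfl⟩ : ∃ k, h = k + 1 := ⟨h - 1, by omega⟩
  simp only [Nat.add_sub_cancel]
  have hoddN : 3 ^ k % 2 = 1 := pow3_odd_nat k
  have hposN : 1 ≤ 3 ^ k := pow3_pos_nat k
  have hc : ((3 ^ k : ℕ) : ℤ) = (3:ℤ) ^ k := cast_pow3 k
  have hpow : (3:ℤ) ^ (k+1) = 3 * (3:ℤ) ^ k := by ring
  have hpowN : (3:ℕ) ^ (k+1) = 3 * 3 ^ k := by ring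
  refine ⟨?_, ?_, ?_⟩
  · -- part (i)
    intro j hj
    show (MCGraph 3 (k+1)).dist 0 ((j:ℕ) : ZMod (3 ^ (k+1)))
      = (MCGraph 3 k).dist 0 ((j:ℕ) : ZMod (3 ^ k))
    have hj2 : 2 * j ≤ 3 ^ k - 1 := by omega
    rw [show ((j : ℕ) : ZMod (3 ^ (k+1))) = (((j:ℤ)) : ZMod (3 ^ (k+1))) by push_cast; ring,
      show ((j : ℕ) : ZMod (3 ^ k)) = (((j:ℤ)) : ZMod (3 ^ k)) by push_cast; ring,
      dist_eq_B (k+1) (j:ℤ) (by omega), dist_eq_B k (j:ℤ) (by omega)]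
  · -- part (ii)
    intro j hjl hju
    show (MCGraph 3 (k+1)).dist 0 ((j:ℕ) : ZMod (3 ^ (k+1)))
      = (MCGraph 3 k).dist 0 ((j:ℕ) : ZMod (3 ^ k)) + 1
    have h2l : 3 ^ k + 1 ≤ 2 * j := by omega
    have e3 : ((j:ℕ) : ZMod (3 ^ k)) = (((j:ℤ) - 3 ^ k : ℤ) : ZMod (3 ^ k)) := by
      rw [show ((j:ℕ) : ZMod (3 ^ k)) = (((j:ℤ)) : ZMod (3 ^ k)) by push_cast; ring,
        zmod_intCast_eq]
      exact ⟨-1, by push_cast; ring⟩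
    rw [show ((j : ℕ) : ZMod (3 ^ (k+1))) = (((j:ℤ)) : ZMod (3 ^ (k+1))) by push_cast; ring,
      e3, dist_eq_B (k+1) (j:ℤ) (by omega), dist_eq_B k ((j:ℤ) - 3 ^ k) (by omega)]
    have hA := (B_pow_add k ((3:ℤ) ^ k - j) (by omega) (by omega)).2
    rw [show (3:ℤ) ^ k - ((3:ℤ) ^ k - (j:ℤ)) = (j:ℤ) by ring] at hA
    have hneg : B ((j:ℤ) - 3 ^ k) = B ((3:ℤ) ^ k - j) := by
      rw [← B_neg ((j:ℤ) - 3 ^ k), show -((j:ℤ) - 3 ^ k) = (3:ℤ) ^ k - (j:ℤ) by ring]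
    omega
  · -- part (iii)
    intro j hj
    show (MCGraph 3 (k+1)).dist 0 (((3 ^ k + j : ℕ)) : ZMod (3 ^ (k+1)))
      = (MCGraph 3 k).dist 0 ((j:ℕ) : ZMod (3 ^ k)) + 1
    have hj2 : 2 * j ≤ 3 ^ k - 1 := by omega
    rw [show (((3 ^ k + j : ℕ)) : ZMod (3 ^ (k+1))) = (((3:ℤ) ^ k + j : ℤ) : ZMod (3 ^ (k+1))) by
        push_cast; ring,
      show ((j : ℕ) : ZMod (3 ^ k)) = (((j:ℤ)) : ZMod (3 ^ k)) by push_cast; ring,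
      dist_eq_B (k+1) ((3:ℤ) ^ k + j) (by omega), dist_eq_B k (j:ℤ) (by omega)]
    exact (B_pow_add k (j:ℤ) (by omega) (by omega)).1
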